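/- Let g = 1/(1-z-z²) be the Fibonacci generating function and f its pseudo-involutory companion (so g(-f)·g = 1 and f(-f(z))=-z, f'(0)=1). Then the B-function B = B_f satisfies the quadratic equation z·B² - (1+z)·B + (3-z) = 0, and hence B_f = (1 + z - √(1-10z+5z²))/(2z). -/

import Mathlib

open PowerSeries

/-- Composition `f ∘ g` of formal power series over `ℝ`, i.e. `f(g(z))`
(the usual composition when `g` has zero constant term). -/
noncomputable def pscomp (f g : PowerSeries ℝ) : PowerSeries ℝ :=
  PowerSeries.mk fun n => ∑ k ∈ Finset.range (n + 1), coeff k f * coeff n (g ^ k)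


section Aux
open Finset

variable (w : PowerSeries ℝ)

lemma coeff_pow_eq_zero (hw : constantCoeff w = 0) {k n : ℕ} (h : n < k) :
    coeff n (w ^ k) = 0 := by
  have hdvd : (X : PowerSeries ℝ) ^ k ∣ w ^ k :=
    pow_dvd_pow_of_dvd (X_dvd_iff.2 hw) k
  exact (X_pow_dvd_iff.1 hdvd) n h

lemma coeff_pscomp_ext (hw : constantCoeff w = 0) (a : PowerSeries ℝ) {n N : ℕ}
    (h : n < N) :
    coeff n (pscomp a w) = ∑ k ∈ range N, coeff k a * coeff n (w ^ k) := by
  rw [pscomp, coeff_mk]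
  apply Finset.sum_subset (range_subset_range.2 h)
  intro k hk hk'
  simp only [mem_range] at hk hk'
  rw [coeff_pow_eq_zero w hw (by omega), mul_zero]

lemma pscomp_mul (hw : constantCoeff w = 0) (a b : PowerSeries ℝ) :
    pscomp (a * b) w = pscomp a w * pscomp b w := by
  ext n
  rw [coeff_pscomp_ext w hw _ (Nat.lt_succ_self n), PowerSeries.coeff_mul]
  have hR : ∀ p ∈ antidiagonal n,
      coeff p.1 (pscomp a w) * coeff p.2 (pscomp b w) =
      ∑ q ∈ range (n+1) ×ˢ range (n+1),
        coeff q.1 a * coeff q.2 b * (coeff p.1 (w ^ q.1) * coeff p.2 (w ^ q.2)) := by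
    intro p hp
    rw [HasAntidiagonal.mem_antidiagonal] at hp
    rw [coeff_pscomp_ext w hw a (show p.1 < n+1 by omega),
        coeff_pscomp_ext w hw b (show p.2 < n+1 by omega), Finset.sum_mul_sum]
    rw [Finset.sum_product]
    refine Finset.sum_congr rfl fun k _ => Finset.sum_congr rfl fun l _ => by ring
  rw [Finset.sum_congr rfl hR, Finset.sum_comm]
  have hinner : ∀ q ∈ range (n+1) ×ˢ range (n+1),
      (∑ p ∈ antidiagonal n,
        coeff q.1 a * coeff q.2 b * (coeff p.1 (w ^ q.1) * coeff p.2 (w ^ q.2))) =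
      coeff q.1 a * coeff q.2 b * coeff n (w ^ (q.1 + q.2)) := by
    intro q _
    rw [← Finset.mul_sum, pow_add, PowerSeries.coeff_mul]
  rw [Finset.sum_congr rfl hinner]
  -- restrict RHS to pairs with sum ≤ n
  rw [show (range (n+1) ×ˢ range (n+1)) =
      ((range (n+1) ×ˢ range (n+1)).filter (fun q => q.1 + q.2 ≤ n)) ∪
      ((range (n+1) ×ˢ range (n+1)).filter (fun q => ¬ q.1 + q.2 ≤ n)) from
      (Finset.filter_union_filter_not_eq _ _).symm,
    Finset.sum_union (Finset.disjoint_filter_filter_not _ _ _)]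
  have hzero : ∑ q ∈ (range (n+1) ×ˢ range (n+1)).filter (fun q => ¬ q.1 + q.2 ≤ n),
      coeff q.1 a * coeff q.2 b * coeff n (w ^ (q.1 + q.2)) = 0 := by
    apply Finset.sum_eq_zero
    intro q hq
    simp only [mem_filter] at hq
    rw [coeff_pow_eq_zero w hw (by omega), mul_zero]
  rw [hzero, add_zero]
  -- LHS: expand coeff of product
  have hL : ∀ m ∈ range (n+1),
      coeff m (a * b) * coeff n (w ^ m) =
      ∑ p ∈ antidiagonal m, coeff p.1 a * coeff p.2 b * coeff n (w ^ (p.1 + p.2)) := by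
    intro m _
    rw [PowerSeries.coeff_mul, Finset.sum_mul]
    refine Finset.sum_congr rfl fun p hp => ?_
    rw [HasAntidiagonal.mem_antidiagonal] at hp
    rw [hp]
  rw [Finset.sum_congr rfl hL, Finset.sum_sigma']
  refine Finset.sum_nbij' (fun x => x.2) (fun q => ⟨q.1 + q.2, q⟩) ?_ ?_ ?_ ?_ ?_
  · rintro ⟨m, p⟩ hx
    simp only [mem_sigma, mem_range, HasAntidiagonal.mem_antidiagonal] at hx
    simp only [mem_filter, mem_product, mem_range]
    omega
  · rintro q hq
    simp only [mem_filter, mem_product, mem_range] at hq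
    simp only [mem_sigma, mem_range, HasAntidiagonal.mem_antidiagonal]
    exact ⟨by omega, trivial⟩
  · rintro ⟨m, p⟩ hx
    simp only [mem_sigma, mem_range, HasAntidiagonal.mem_antidiagonal] at hx
    simp [hx.2]
  · rintro q _; rfl
  · rintro ⟨m, p⟩ _; rfl

lemma pscomp_add (a b : PowerSeries ℝ) :
    pscomp (a + b) w = pscomp a w + pscomp b w := by
  ext n
  simp [pscomp, add_mul, Finset.sum_add_distrib]

lemma pscomp_one (hw : constantCoeff w = 0) : pscomp 1 w = 1 := by
  ext n
  rw [coeff_pscomp_ext w hw 1 (Nat.lt_succ_self n)]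
  rw [Finset.sum_eq_single 0]
  · simp
  · intro k _ hk
    rw [PowerSeries.coeff_one, if_neg hk, zero_mul]
  · simp

lemma pscomp_X (hw : constantCoeff w = 0) : pscomp X w = w := by
  ext n
  rw [coeff_pscomp_ext w hw X (show n < n + 2 by omega)]
  rw [Finset.sum_eq_single 1]
  · simp
  · intro k _ hk
    rw [PowerSeries.coeff_X, if_neg hk, zero_mul]
  · intro h; exact absurd (Finset.mem_range.2 (by omega)) h

noncomputable def pscompHom (hw : constantCoeff w = 0) :
    PowerSeries ℝ →+* PowerSeries ℝ where
  toFun a := pscomp a w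
  map_one' := pscomp_one w hw
  map_mul' := pscomp_mul w hw
  map_zero' := by ext n; simp [pscomp]
  map_add' := pscomp_add w

@[simp] lemma pscompHom_apply (hw : constantCoeff w = 0) (a : PowerSeries ℝ) :
    pscompHom w hw a = pscomp a w := rfl

end Aux

lemma pscomp_cancel (f a : PowerSeries ℝ)
    (hf0 : constantCoeff f = 0) (hf1 : coeff 1 f = 1)
    (h : pscomp a (X * f) = 0) : a = 0 := by
  have hw0 : constantCoeff (X * f) = 0 := by simp
  obtain ⟨u, hu⟩ := X_dvd_iff.2 hf0
  have hu0 : constantCoeff u = 1 := by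
    have h1 : coeff (0 + 1) (X * u) = coeff 0 u := coeff_succ_X_mul 0 u
    rw [← hu] at h1
    simpa [hf1] using h1.symm
  have hwpow : ∀ k : ℕ, (X * f) ^ k = X ^ (2 * k) * u ^ k := by
    intro k
    rw [hu]
    ring
  have key1 : ∀ k n : ℕ, n < 2 * k → coeff n ((X * f) ^ k) = 0 := by
    intro k n hn
    rw [hwpow]
    exact X_pow_dvd_iff.1 (Dvd.intro _ rfl) n hn
  have key2 : ∀ k : ℕ, coeff (2 * k) ((X * f) ^ k) = 1 := by
    intro k
    rw [hwpow]
    have := coeff_X_pow_mul (u ^ k) (2 * k) 0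
    rw [zero_add] at this
    rw [this, coeff_zero_eq_constantCoeff, map_pow, hu0, one_pow]
  have H : ∀ n, coeff n a = 0 := by
    intro n
    induction n using Nat.strong_induction_on with
    | _ n ih =>
      have h2 : coeff (2 * n) (pscomp a (X * f)) = 0 := by rw [h]; simp
      rw [coeff_pscomp_ext _ hw0 a (show 2 * n < 2 * n + 1 by omega)] at h2
      rw [Finset.sum_eq_single n] at h2
      · rw [key2, mul_one] at h2
        exact h2
      · intro k _ hkn
        rcases lt_or_gt_of_ne hkn with h' | h'
        · rw [ih k h', zero_mul]
        · rw [key1 k (2 * n) (by omega), mul_zero]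
      · intro hn
        exact absurd (Finset.mem_range.2 (by omega)) hn
  ext n
  simp [H n]

/-- For g = 1/(1-z-z²) with pseudo-involutory companion f, the B-function
satisfies z·B² - (1+z)·B + (3-z) = 0, hence B = (1+z-√(1-10z+5z²))/(2z). -/
theorem stmt_19 (f B s : PowerSeries ℝ)
    (hf0 : constantCoeff f = 0) (hf1 : coeff 1 f = 1)
    (hpi : pscomp f (-f) = -X)
    (hg : (1 - X - X ^ 2 : PowerSeries ℝ)⁻¹ *
      pscomp (1 - X - X ^ 2 : PowerSeries ℝ)⁻¹ (-f) = 1)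
    (hB : f - X = X * f * pscomp B (X * f))
    -- s = √(1 - 10z + 5z²), the square root with constant term 1
    (hs : s ^ 2 = 1 - 10 * X + 5 * X ^ 2) (hs0 : constantCoeff s = 1) :
    X * B ^ 2 - (1 + X) * B + (3 - X) = 0 ∧ 2 * X * B = 1 + X - s := by
  have hnf0 : constantCoeff (-f) = 0 := by simp [hf0]
  have hU1 : constantCoeff (1 - X - X ^ 2 : PowerSeries ℝ) = 1 := by simp
  have hUinv : (1 - X - X ^ 2 : PowerSeries ℝ) * (1 - X - X ^ 2 : PowerSeries ℝ)⁻¹ = 1 :=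
    PowerSeries.mul_inv_cancel _ (by rw [hU1]; norm_num)
  -- pscomp of U⁻¹ at -f equals U
  have hQ : pscomp (1 - X - X ^ 2 : PowerSeries ℝ)⁻¹ (-f) = (1 - X - X ^ 2 : PowerSeries ℝ) := by
    have h1 := congrArg (fun x => (1 - X - X ^ 2 : PowerSeries ℝ) * x) hg
    simp only [← mul_assoc, hUinv, one_mul, mul_one] at h1
    exact h1
  -- pscomp of U at -f
  have hcompU : pscomp (1 - X - X ^ 2 : PowerSeries ℝ) (-f) = 1 + f - f ^ 2 := by
    have h1 : pscompHom (-f) hnf0 (1 - X - X ^ 2) = 1 - (-f) - (-f) ^ 2 := by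
      rw [map_sub, map_sub, map_one, map_pow]
      rw [pscompHom_apply (-f) hnf0 X, pscomp_X _ hnf0]
    rw [pscompHom_apply] at h1
    rw [h1]; ring
  have E : (1 + f - f ^ 2) * (1 - X - X ^ 2 : PowerSeries ℝ) = 1 := by
    have h2 := congrArg (pscompHom (-f) hnf0) hUinv
    rw [map_mul, map_one, pscompHom_apply, pscompHom_apply, hcompU, hQ] at h2
    exact h2
  -- main computation
  have hw0 : constantCoeff (X * f) = 0 := by simp
  have hT : (X * f) * ((X * f) * (pscomp B (X * f)) ^ 2
      - (1 + X * f) * (pscomp B (X * f)) + (3 - X * f)) = 0 := by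
    linear_combination (-(X * f * pscomp B (X * f)) - f + X + 1 + X * f) * hB - E
  have hwne : (X : PowerSeries ℝ) * f ≠ 0 :=
    mul_ne_zero X_ne_zero (fun h0 => by simp [h0] at hf1)
  have hT0 : (X * f) * (pscomp B (X * f)) ^ 2
      - (1 + X * f) * (pscomp B (X * f)) + (3 - X * f) = 0 :=
    (mul_eq_zero.1 hT).resolve_left hwne
  have hP : pscomp (X * B ^ 2 - (1 + X) * B + (3 - X)) (X * f) = 0 := by
    have h1 : pscompHom (X * f) hw0 (X * B ^ 2 - (1 + X) * B + (3 - X)) =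
        (X * f) * (pscomp B (X * f)) ^ 2
        - (1 + X * f) * (pscomp B (X * f)) + (3 - X * f) := by
      rw [map_add, map_sub, map_mul, map_mul, map_pow, map_add, map_one, map_sub,
        map_ofNat, pscompHom_apply (X * f) hw0 X, pscompHom_apply (X * f) hw0 B,
        pscomp_X _ hw0]
    rw [pscompHom_apply] at h1
    rw [h1, hT0]
  have hq : X * B ^ 2 - (1 + X) * B + (3 - X) = 0 := pscomp_cancel f _ hf0 hf1 hP
  refine ⟨hq, ?_⟩
  have ha2 : (2 * X * B - (1 + X)) ^ 2 = s ^ 2 := by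
    linear_combination (4 * X) * hq - hs
  have hfact : (2 * X * B - (1 + X) - s) * (2 * X * B - (1 + X) + s) = 0 := by
    linear_combination ha2
  rcases mul_eq_zero.1 hfact with h1 | h1
  · exfalso
    have h2 := congrArg (constantCoeff) h1
    simp only [map_sub, map_add, map_mul, map_ofNat, constantCoeff_X, constantCoeff_one,
      map_zero, hs0] at h2
    norm_num at h2
  · linear_combination h1
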